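/- A topological space (X, 𝒯^α) is para-rc-Lindelöf if and only if (X, 𝒯) is para-rc-Lindelöf. -/

import Mathlib

open Set TopologicalSpace

universe u v

variable {X : Type u} {Y : Type v}

/-- A set is an α-set (α-open) w.r.t. the topology `T` if `A ⊆ Int (Cl (Int A))`. -/
def AlphaOpen (T : TopologicalSpace X) (A : Set X) : Prop :=
  letI := T
  A ⊆ interior (closure (interior A))

/-- The α-topology `𝒯^α`, whose open sets are exactly the α-sets of `T`. -/
def alphaTop (T : TopologicalSpace X) : TopologicalSpace X :=
  letI := T
  { IsOpen := fun A => A ⊆ interior (closure (interior A))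
    isOpen_univ := by simp
    isOpen_inter := by
      intro A B hA hB
      have hsub : interior (closure (interior A)) ∩ interior (closure (interior B)) ⊆
          closure (interior (A ∩ B)) := by
        intro x hx
        have h1 : interior (closure (interior B)) ∩ closure (interior A) ⊆
            closure (interior (closure (interior B)) ∩ interior A) :=
          isOpen_interior.inter_closure
        have h2 : interior (closure (interior B)) ∩ interior A ⊆
            closure (interior A ∩ interior B) := by
          intro y hy
          have h : interior A ∩ closure (interior B) ⊆ closure (interior A ∩ interior B) :=
            isOpen_interior.inter_closure
          exact h ⟨hy.2, interior_subset hy.1⟩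
        have h3 : closure (interior (closure (interior B)) ∩ interior A) ⊆
            closure (interior A ∩ interior B) := by
          calc closure (interior (closure (interior B)) ∩ interior A)
              ⊆ closure (closure (interior A ∩ interior B)) := closure_mono h2
            _ = closure (interior A ∩ interior B) := closure_closure
        have hx' : x ∈ closure (interior A ∩ interior B) :=
          h3 (h1 ⟨hx.2, interior_subset hx.1⟩)
        rwa [← interior_inter] at hx'
      intro x hx
      exact interior_maximal hsub (isOpen_interior.inter isOpen_interior) ⟨hA hx.1, hB hx.2⟩
    isOpen_sUnion := by
      intro S hS x hx
      obtain ⟨t, htS, hxt⟩ := hx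
      have h : interior (closure (interior t)) ⊆ interior (closure (interior (⋃₀ S))) :=
        interior_mono (closure_mono (interior_mono (subset_sUnion_of_mem htS)))
      exact h (hS t htS hxt) }

/-- `A` is semi-open w.r.t. `T` if `A ⊆ Cl (Int A)`. -/
def SemiOpen (T : TopologicalSpace X) (A : Set X) : Prop :=
  letI := T
  A ⊆ closure (interior A)

/-- `A` is semi-closed if its complement is semi-open. -/
def SemiClosed (T : TopologicalSpace X) (A : Set X) : Prop :=
  SemiOpen T Aᶜ

/-- The semi-closure of `A`: the intersection of all semi-closed sets containing `A`. -/
def sCl (T : TopologicalSpace X) (A : Set X) : Set X :=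
  ⋂₀ {C | SemiClosed T C ∧ A ⊆ C}

/-- `A` is sg-closed if `sCl A ⊆ U` whenever `A ⊆ U` with `U` semi-open. -/
def SgClosed (T : TopologicalSpace X) (A : Set X) : Prop :=
  ∀ U : Set X, SemiOpen T U → A ⊆ U → sCl T A ⊆ U

/-- `A` is sg-open if its complement is sg-closed. -/
def SgOpen (T : TopologicalSpace X) (A : Set X) : Prop :=
  SgClosed T Aᶜ

/-- `A` is regular closed w.r.t. `T` if `A = Cl (Int A)`. -/
def RegClosed (T : TopologicalSpace X) (A : Set X) : Prop :=
  letI := T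
  A = closure (interior A)

/-- A family `𝒱` refines a family `𝒰` if every member of `𝒱` is contained in a member of `𝒰`. -/
def Refines (𝒱 𝒰 : Set (Set X)) : Prop :=
  ∀ V ∈ 𝒱, ∃ U ∈ 𝒰, V ⊆ U

/-- A family of sets is locally finite if every point has a neighbourhood
meeting only finitely many members. -/
def LocFinite (T : TopologicalSpace X) (𝒱 : Set (Set X)) : Prop :=
  ∀ x : X, ∃ N ∈ @nhds X T x, {V ∈ 𝒱 | (V ∩ N).Nonempty}.Finite

/-- A family of sets is locally countable if every point has a neighbourhood
meeting only countably many members. -/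
def LocCountable (T : TopologicalSpace X) (𝒱 : Set (Set X)) : Prop :=
  ∀ x : X, ∃ N ∈ @nhds X T x, {V ∈ 𝒱 | (V ∩ N).Nonempty}.Countable

/-- A family of sets is discrete if every point has a neighbourhood
meeting at most one member. -/
def DiscreteFam (T : TopologicalSpace X) (𝒱 : Set (Set X)) : Prop :=
  ∀ x : X, ∃ N ∈ @nhds X T x, {V ∈ 𝒱 | (V ∩ N).Nonempty}.Subsingleton

/-- A family is σ-discrete if it is a countable union of discrete families. -/
def SigmaDiscrete (T : TopologicalSpace X) (𝒱 : Set (Set X)) : Prop :=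
  ∃ 𝒲 : ℕ → Set (Set X), 𝒱 = ⋃ n, 𝒲 n ∧ ∀ n, DiscreteFam T (𝒲 n)

/-- A family is closure-preserving if for every subfamily the closure of the
union is the union of the closures. -/
def ClosurePreserving (T : TopologicalSpace X) (𝒲 : Set (Set X)) : Prop :=
  letI := T
  ∀ 𝒲' ⊆ 𝒲, closure (⋃₀ 𝒲') = ⋃ W ∈ 𝒲', closure W

/-- A family is σ-closure-preserving if it is a countable union of
closure-preserving families. -/
def SigmaClosurePreserving (T : TopologicalSpace X) (𝒱 : Set (Set X)) : Prop :=
  ∃ 𝒲 : ℕ → Set (Set X), 𝒱 = ⋃ n, 𝒲 n ∧ ∀ n, ClosurePreserving T (𝒲 n)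

/-- Semi-compact: every semi-open cover has a finite subcover. -/
def SemiCompact (T : TopologicalSpace X) : Prop :=
  ∀ 𝒰 : Set (Set X), (∀ U ∈ 𝒰, SemiOpen T U) → ⋃₀ 𝒰 = univ →
    ∃ 𝒱 ⊆ 𝒰, 𝒱.Finite ∧ ⋃₀ 𝒱 = univ

/-- S-closed: for every semi-open cover there is a finite subfamily
whose closures cover. -/
def SClosed (T : TopologicalSpace X) : Prop :=
  letI := T
  ∀ 𝒰 : Set (Set X), (∀ U ∈ 𝒰, SemiOpen T U) → ⋃₀ 𝒰 = univ →
    ∃ 𝒱 ⊆ 𝒰, 𝒱.Finite ∧ (⋃ V ∈ 𝒱, closure V) = univ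

/-- s-closed: for every semi-open cover there is a finite subfamily
whose semi-closures cover. -/
def SmallSClosed (T : TopologicalSpace X) : Prop :=
  ∀ 𝒰 : Set (Set X), (∀ U ∈ 𝒰, SemiOpen T U) → ⋃₀ 𝒰 = univ →
    ∃ 𝒱 ⊆ 𝒰, 𝒱.Finite ∧ (⋃ V ∈ 𝒱, sCl T V) = univ

/-- rc-Lindelöf: every regular closed cover has a countable subcover. -/
def RcLindelof (T : TopologicalSpace X) : Prop :=
  ∀ 𝒰 : Set (Set X), (∀ U ∈ 𝒰, RegClosed T U) → ⋃₀ 𝒰 = univ →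
    ∃ 𝒱 ⊆ 𝒰, 𝒱.Countable ∧ ⋃₀ 𝒱 = univ

/-- sg-compact: every sg-open cover has a finite subcover. -/
def SgCompact (T : TopologicalSpace X) : Prop :=
  ∀ 𝒰 : Set (Set X), (∀ U ∈ 𝒰, SgOpen T U) → ⋃₀ 𝒰 = univ →
    ∃ 𝒱 ⊆ 𝒰, 𝒱.Finite ∧ ⋃₀ 𝒱 = univ

/-- `A` is S-closed relative to `X`: every cover of `A` by semi-open sets of `X`
has a finite subfamily whose closures cover `A`. -/
def SClosedRel (T : TopologicalSpace X) (A : Set X) : Prop :=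
  letI := T
  ∀ 𝒰 : Set (Set X), (∀ U ∈ 𝒰, SemiOpen T U) → A ⊆ ⋃₀ 𝒰 →
    ∃ 𝒱 ⊆ 𝒰, 𝒱.Finite ∧ A ⊆ ⋃ V ∈ 𝒱, closure V

/-- `A` is s-closed relative to `X`: every cover of `A` by semi-open sets of `X`
has a finite subfamily whose semi-closures cover `A`. -/
def SmallSClosedRel (T : TopologicalSpace X) (A : Set X) : Prop :=
  ∀ 𝒰 : Set (Set X), (∀ U ∈ 𝒰, SemiOpen T U) → A ⊆ ⋃₀ 𝒰 →
    ∃ 𝒱 ⊆ 𝒰, 𝒱.Finite ∧ A ⊆ ⋃ V ∈ 𝒱, sCl T V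

/-- Locally S-closed: every point has a neighbourhood which is S-closed relative to `X`. -/
def LocallySClosed (T : TopologicalSpace X) : Prop :=
  ∀ x : X, ∃ N ∈ @nhds X T x, SClosedRel T N

/-- Locally s-closed: every point has a neighbourhood which is s-closed relative to `X`. -/
def LocallySmallSClosed (T : TopologicalSpace X) : Prop :=
  ∀ x : X, ∃ N ∈ @nhds X T x, SmallSClosedRel T N

/-- para-S-closed: every semi-open cover has a locally finite refinement by
semi-open sets whose union is dense. -/
def ParaSClosed (T : TopologicalSpace X) : Prop :=
  letI := T
  ∀ 𝒰 : Set (Set X), (∀ U ∈ 𝒰, SemiOpen T U) → ⋃₀ 𝒰 = univ →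
    ∃ 𝒱 : Set (Set X), (∀ V ∈ 𝒱, SemiOpen T V) ∧ LocFinite T 𝒱 ∧ Refines 𝒱 𝒰 ∧
      closure (⋃₀ 𝒱) = univ

/-- para-rc-Lindelöf: every regular closed cover has a locally countable
refinement by regular closed sets. -/
def ParaRcLindelof (T : TopologicalSpace X) : Prop :=
  ∀ 𝒰 : Set (Set X), (∀ U ∈ 𝒰, RegClosed T U) → ⋃₀ 𝒰 = univ →
    ∃ 𝒱 : Set (Set X), (∀ V ∈ 𝒱, RegClosed T V) ∧ LocCountable T 𝒱 ∧ Refines 𝒱 𝒰 ∧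
      ⋃₀ 𝒱 = univ

/-- α-subparacompact: every α-open cover has a σ-discrete closed refinement covering `X`. -/
def AlphaSubparacompact (T : TopologicalSpace X) : Prop :=
  ∀ 𝒰 : Set (Set X), (∀ U ∈ 𝒰, AlphaOpen T U) → ⋃₀ 𝒰 = univ →
    ∃ 𝒱 : Set (Set X), (∀ V ∈ 𝒱, @IsClosed X T V) ∧ SigmaDiscrete T 𝒱 ∧ Refines 𝒱 𝒰 ∧
      ⋃₀ 𝒱 = univ

/-- gα-closed: `Cl_α A ⊆ U` whenever `A ⊆ U` with `U` α-open. -/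
def GAlphaClosed (T : TopologicalSpace X) (A : Set X) : Prop :=
  ∀ U : Set X, AlphaOpen T U → A ⊆ U → @closure X (alphaTop T) A ⊆ U

/-- α-paracompact: every α-open cover has a locally finite open refinement. -/
def AlphaParacompact (T : TopologicalSpace X) : Prop :=
  ∀ 𝒰 : Set (Set X), (∀ U ∈ 𝒰, AlphaOpen T U) → ⋃₀ 𝒰 = univ →
    ∃ 𝒱 : Set (Set X), (∀ V ∈ 𝒱, T.IsOpen V) ∧ LocFinite T 𝒱 ∧ Refines 𝒱 𝒰 ∧
      ⋃₀ 𝒱 = univ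

/-!
An α-open set `O` lies in the `𝒯`-open set `Int (Cl (Int O))`, and a semi-open set meeting
`Int (Cl (Int O))` already meets `Int O`. Hence `𝒯` and `𝒯^α` give the same closure to `𝒯`-open
sets, so they have the same regular closed sets; and a `𝒯^α`-neighbourhood `N` of a point can be
replaced by the `𝒯`-neighbourhood `Int (Cl (Int N))` without meeting more regular closed sets, so
local countability of a regular closed family is the same in both topologies.
-/

section AlphaTopology

open Topology

variable [t : TopologicalSpace X] {s U V : Set X} {𝒱 : Set (Set X)} {x : X}

theorem IsOpen.semiOpen (hU : IsOpen U) : SemiOpen t U :=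
  subset_closure.trans (closure_mono hU.interior_eq.ge)

theorem RegClosed.semiOpen (hV : RegClosed t V) : SemiOpen t V :=
  hV.subset

theorem SemiOpen.inter_interior_nonempty (hV : SemiOpen t V)
    (h : (V ∩ interior (closure (interior s))).Nonempty) : (V ∩ interior s).Nonempty := by
  have h₁ : (interior V ∩ interior (closure (interior s))).Nonempty :=
    (closure_inter_open_nonempty_iff isOpen_interior).1 (h.mono (inter_subset_inter_left _ hV))
  have h₂ : (interior s ∩ interior V).Nonempty :=
    (closure_inter_open_nonempty_iff isOpen_interior).1
      (h₁.mono fun _ hx => ⟨interior_subset hx.2, hx.1⟩)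
  exact h₂.mono fun _ hx => ⟨interior_subset hx.2, hx.1⟩

theorem alphaTop_le : alphaTop t ≤ t :=
  TopologicalSpace.le_def.2 fun _ hU =>
    hU.subset_interior_closure.trans (interior_mono (closure_mono hU.interior_eq.ge))

theorem interior_alphaTop_subset :
    @interior X (alphaTop t) s ⊆ interior (closure (interior s)) := by
  have hα : @interior X (alphaTop t) s ⊆
      interior (closure (interior (@interior X (alphaTop t) s))) :=
    @isOpen_interior X (alphaTop t) s
  exact hα.trans
    (interior_mono (closure_mono (interior_mono (@interior_subset X (alphaTop t) s))))

theorem IsOpen.closure_subset_closure_alphaTop (hU : IsOpen U) :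
    closure U ⊆ closure[alphaTop t] U := by
  intro x hx
  refine (@mem_closure_iff X (alphaTop t) _ _).2 fun O hO hxO => ?_
  have hmeet : (U ∩ interior (closure (interior O))).Nonempty := by
    rw [inter_comm]
    exact mem_closure_iff.1 hx _ isOpen_interior (hO hxO)
  rw [inter_comm]
  exact (hU.semiOpen.inter_interior_nonempty hmeet).mono
    (inter_subset_inter_right _ interior_subset)

theorem closure_interior_alphaTop :
    closure[alphaTop t] (@interior X (alphaTop t) s) = closure (interior s) := by
  refine subset_antisymm ?_ ?_
  · refine @closure_minimal X (alphaTop t) _ _ ?_ (isClosed_closure.mono alphaTop_le)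
    exact interior_alphaTop_subset.trans interior_subset
  · refine isOpen_interior.closure_subset_closure_alphaTop.trans
      (@closure_mono X (alphaTop t) _ _ ?_)
    exact @interior_maximal X (alphaTop t) _ _ interior_subset
      (isOpen_interior.mono alphaTop_le)

theorem regClosed_alphaTop_iff : RegClosed (alphaTop t) s ↔ RegClosed t s := by
  rw [RegClosed, closure_interior_alphaTop, RegClosed]

theorem interior_closure_interior_mem_nhds (hs : s ∈ @nhds X (alphaTop t) x) :
    interior (closure (interior s)) ∈ 𝓝 x :=
  isOpen_interior.mem_nhds
    (interior_alphaTop_subset ((@mem_interior_iff_mem_nhds X (alphaTop t) _ _).2 hs))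

theorem locCountable_alphaTop_iff (h𝒱 : ∀ V ∈ 𝒱, SemiOpen t V) :
    LocCountable (alphaTop t) 𝒱 ↔ LocCountable t 𝒱 := by
  refine ⟨fun h x => ?_, fun h x => ?_⟩
  · obtain ⟨N, hN, hcount⟩ := h x
    refine ⟨_, interior_closure_interior_mem_nhds hN, hcount.mono ?_⟩
    rintro V ⟨hV, hVN⟩
    exact ⟨hV, ((h𝒱 V hV).inter_interior_nonempty hVN).mono
      (inter_subset_inter_right _ interior_subset)⟩
  · obtain ⟨N, hN, hcount⟩ := h x
    exact ⟨N, nhds_mono alphaTop_le hN, hcount⟩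

end AlphaTopology

/-- `(X, 𝒯^α)` is para-rc-Lindelöf iff `(X, 𝒯)` is para-rc-Lindelöf. -/
theorem paraRcLindelof_alphaTop_iff (T : TopologicalSpace X) :
    ParaRcLindelof (alphaTop T) ↔ ParaRcLindelof T := by
  unfold ParaRcLindelof
  simp only [regClosed_alphaTop_iff]
  refine forall_congr' fun _ => imp_congr_right fun _ => imp_congr_right fun _ =>
    exists_congr fun _ => and_congr_right fun h𝒱 => and_congr_left' ?_
  exact locCountable_alphaTop_iff fun V hV => (h𝒱 V hV).semiOpen
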